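/- Let n ≥ 1 and let Σ be a real symmetric positive definite n×n matrix. The linear operator S_Σ : 𝕊_n → 𝕊_n defined by S_Σ(σ) := Σ⁻¹σΣ⁻¹ + (1/2) Tr(Σ⁻¹σ) Σ⁻¹ is self-adjoint with respect to the Frobenius inner product, and it is positive definite: for every σ ∈ 𝕊_n, ⟨σ, S_Σ(σ)⟩ ≥ Tr((Σ^{−1/2} σ Σ^{−1/2})²), and this quantity is strictly positive whenever σ ≠ 0. Consequently S_Σ is a bijection on 𝕊_n. -/

import Mathlib

open Matrix

noncomputable section

/-- The operator `S_Σ(σ) := Σ⁻¹ σ Σ⁻¹ + (1/2) Tr(Σ⁻¹σ) Σ⁻¹` on real `n×n` matrices. -/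
def opS {n : ℕ} (Sg : Matrix (Fin n) (Fin n) ℝ) (sig : Matrix (Fin n) (Fin n) ℝ) :
    Matrix (Fin n) (Fin n) ℝ :=
  Sg⁻¹ * sig * Sg⁻¹ + ((1/2 : ℝ) * (Sg⁻¹ * sig).trace) • Sg⁻¹

/-- The square root of a positive semidefinite matrix, as `Matrix.PosSemidef.sqrt` was defined
in older Mathlib (removed since). -/
def Matrix.PosSemidef.sqrt {m : Type*} [Fintype m] [DecidableEq m] {𝕜 : Type*} [RCLike 𝕜] [PartialOrder 𝕜]
    {A : Matrix m m 𝕜} (hA : A.PosSemidef) : Matrix m m 𝕜 :=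
  (hA.isHermitian.eigenvectorUnitary : Matrix m m 𝕜) *
    diagonal (fun i => ((√(hA.isHermitian.eigenvalues i) : ℝ) : 𝕜)) *
    (star hA.isHermitian.eigenvectorUnitary : Matrix m m 𝕜)

/-!
With `R = Σ^{-1/2}`, cyclicity of the trace gives
`⟨σ, S_Σ σ⟩ = Tr((RσR)²) + ½ Tr(Σ⁻¹σ)²`, and for symmetric `σ` the first term is the squared
Frobenius norm of the symmetric matrix `RσR`, which vanishes only for `σ = 0` because `R` is
invertible. Hence `S_Σ` is injective on the finite-dimensional space of symmetric matrices,
which it preserves, and therefore bijective there.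
-/

namespace Matrix

section Sqrt

variable {m : Type*} [Fintype m] [DecidableEq m] {A : Matrix m m ℝ}

theorem PosSemidef.sqrt_mul_self (hA : A.PosSemidef) : hA.sqrt * hA.sqrt = A := by
  have hdiag : diagonal (fun i => √(hA.isHermitian.eigenvalues i)) *
      diagonal (fun i => √(hA.isHermitian.eigenvalues i))
        = diagonal (RCLike.ofReal ∘ hA.isHermitian.eigenvalues) := by
    rw [diagonal_mul_diagonal]
    congr 1
    funext i
    simp [Real.mul_self_sqrt (hA.eigenvalues_nonneg i)]
  conv_rhs => rw [hA.isHermitian.spectral_theorem, Unitary.conjStarAlgAut_apply, ← hdiag]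
  simp only [PosSemidef.sqrt, RCLike.ofReal_real_eq_id, id, Matrix.mul_assoc]
  rw [← Matrix.mul_assoc (star _ : Matrix m m ℝ), Unitary.coe_star_mul_self, Matrix.one_mul]

theorem PosSemidef.isSymm_sqrt (hA : A.PosSemidef) : hA.sqrt.IsSymm := by
  rw [← isHermitian_iff_isSymm]
  simp [IsHermitian, PosSemidef.sqrt, star_eq_conjTranspose, Matrix.mul_assoc]

theorem PosDef.isUnit_sqrt_inv (hA : A.PosDef) : IsUnit hA.posSemidef.sqrt⁻¹ := by
  have hsq : IsUnit (hA.posSemidef.sqrt * hA.posSemidef.sqrt) := by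
    rw [hA.posSemidef.sqrt_mul_self]; exact hA.isUnit
  exact (isUnit_nonsing_inv_iff).mpr (isUnit_of_mul_isUnit_left hsq)

end Sqrt

theorem IsSymm.mul_mul_same {m α : Type*} [Fintype m] [CommSemiring α] {A B : Matrix m m α}
    (hA : A.IsSymm) (hB : B.IsSymm) : (B * A * B).IsSymm := by
  rw [IsSymm, transpose_mul, transpose_mul, hA.eq, hB.eq, Matrix.mul_assoc]

theorem trace_sq_pos_of_isSymm {m : Type*} [Fintype m] [DecidableEq m] {M : Matrix m m ℝ}
    (hM : M.IsSymm) (h : M ≠ 0) : 0 < (M ^ 2).trace := by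
  have hMM : M ^ 2 = Mᴴ * M := by
    rw [pow_two, conjTranspose_eq_transpose_of_trivial, hM.eq]
  rw [hMM]
  exact (posSemidef_conjTranspose_mul_self M).trace_nonneg.lt_of_ne'
    (trace_conjTranspose_mul_self_eq_zero_iff.not.mpr h)

theorem trace_sq_mul_mul {m α : Type*} [Fintype m] [DecidableEq m] [CommRing α]
    (R σ : Matrix m m α) :
    ((R * σ * R) ^ 2).trace = (σ * ((R * R) * σ * (R * R))).trace := by
  rw [pow_two, show R * σ * R * (R * σ * R) = R * (σ * (R * R) * σ * R) by noncomm_ring,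
    trace_mul_comm R]
  congr 1
  noncomm_ring

theorem mem_selfAdjoint_submodule_iff_isSymm {m : Type*} {A : Matrix m m ℝ} :
    A ∈ selfAdjoint.submodule ℝ (Matrix m m ℝ) ↔ A.IsSymm := by
  rw [← isHermitian_iff_isSymm]
  rfl

end Matrix

theorem LinearMap.existsUnique_mem_apply_eq {K V : Type*} [Field K] [AddCommGroup V] [Module K V]
    [FiniteDimensional K V] {f : V →ₗ[K] V} {p : Submodule K V} (hmaps : ∀ x ∈ p, f x ∈ p)
    (hinj : ∀ x ∈ p, f x = 0 → x = 0) {y : V} (hy : y ∈ p) : ∃! x, x ∈ p ∧ f x = y := by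
  have hres : Function.Injective (f.restrict hmaps) := by
    rw [← LinearMap.ker_eq_bot, LinearMap.ker_eq_bot']
    exact fun x hx => Subtype.ext (hinj x x.2 (congrArg Subtype.val hx))
  obtain ⟨x, hx⟩ := LinearMap.injective_iff_surjective.mp hres ⟨y, hy⟩
  refine ⟨x, ⟨x.2, congrArg Subtype.val hx⟩, fun x' ⟨hx'p, hx'y⟩ => ?_⟩
  have hfx : f x = y := congrArg Subtype.val hx
  exact sub_eq_zero.mp (hinj _ (p.sub_mem hx'p x.2) (by rw [map_sub, hx'y, hfx, sub_self]))

section OpS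

variable {n : ℕ} (Sg : Matrix (Fin n) (Fin n) ℝ)

def opSₗ : Matrix (Fin n) (Fin n) ℝ →ₗ[ℝ] Matrix (Fin n) (Fin n) ℝ where
  toFun := opS Sg
  map_add' a b := by
    simp only [opS, Matrix.add_mul, trace_add, mul_add, add_smul]
    abel
  map_smul' c a := by
    simp only [opS, Matrix.mul_smul, Matrix.smul_mul, trace_smul, smul_eq_mul, smul_add,
      smul_smul, RingHom.id_apply]
    ring_nf

theorem opSₗ_apply (σ : Matrix (Fin n) (Fin n) ℝ) : opSₗ Sg σ = opS Sg σ := rfl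

variable {Sg}

theorem isSymm_opS (hSg : Sg.IsSymm) {σ : Matrix (Fin n) (Fin n) ℝ} (hσ : σ.IsSymm) :
    (opS Sg σ).IsSymm :=
  (hσ.mul_mul_same hSg.inv).add (hSg.inv.smul _)

theorem trace_mul_opS_comm (σ₁ σ₂ : Matrix (Fin n) (Fin n) ℝ) :
    (σ₁ * opS Sg σ₂).trace = (opS Sg σ₁ * σ₂).trace := by
  simp only [opS, Matrix.mul_add, Matrix.add_mul, trace_add, Matrix.mul_smul, Matrix.smul_mul,
    trace_smul, smul_eq_mul]
  have hcyc : (σ₁ * (Sg⁻¹ * σ₂ * Sg⁻¹)).trace = (Sg⁻¹ * σ₁ * Sg⁻¹ * σ₂).trace := by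
    rw [trace_mul_comm, show Sg⁻¹ * σ₂ * Sg⁻¹ * σ₁ = (Sg⁻¹ * σ₂) * (Sg⁻¹ * σ₁) by noncomm_ring,
      trace_mul_comm]
    congr 1
    noncomm_ring
  rw [hcyc, trace_mul_comm σ₁ Sg⁻¹]
  ring

theorem trace_mul_opS_self {R : Matrix (Fin n) (Fin n) ℝ} (hR : R * R = Sg⁻¹)
    (σ : Matrix (Fin n) (Fin n) ℝ) :
    (σ * opS Sg σ).trace = ((R * σ * R) ^ 2).trace + (1/2 : ℝ) * (Sg⁻¹ * σ).trace ^ 2 := by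
  rw [trace_sq_mul_mul, hR, opS, Matrix.mul_add, trace_add, Matrix.mul_smul, trace_smul,
    smul_eq_mul, trace_mul_comm σ Sg⁻¹, Matrix.mul_assoc Sg⁻¹]
  ring

theorem trace_sq_le_trace_mul_opS {R : Matrix (Fin n) (Fin n) ℝ} (hR : R * R = Sg⁻¹)
    (σ : Matrix (Fin n) (Fin n) ℝ) : ((R * σ * R) ^ 2).trace ≤ (σ * opS Sg σ).trace := by
  rw [trace_mul_opS_self hR]
  nlinarith [sq_nonneg (Sg⁻¹ * σ).trace]

end OpS

theorem stmt4_general {n : ℕ} (Sg : Matrix (Fin n) (Fin n) ℝ)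
    (hpos : Sg.PosDef) :
    (∀ sig : Matrix (Fin n) (Fin n) ℝ, sig.IsSymm → (opS Sg sig).IsSymm) ∧
    (∀ sig1 sig2 : Matrix (Fin n) (Fin n) ℝ, sig1.IsSymm → sig2.IsSymm →
      (sig1 * opS Sg sig2).trace = (opS Sg sig1 * sig2).trace) ∧
    (∀ sig : Matrix (Fin n) (Fin n) ℝ, sig.IsSymm →
      (sig * opS Sg sig).trace ≥ ((hpos.posSemidef.sqrt⁻¹ * sig * hpos.posSemidef.sqrt⁻¹) ^ 2).trace) ∧
    (∀ sig : Matrix (Fin n) (Fin n) ℝ, sig.IsSymm → sig ≠ 0 →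
      0 < ((hpos.posSemidef.sqrt⁻¹ * sig * hpos.posSemidef.sqrt⁻¹) ^ 2).trace) ∧
    ∀ tau : Matrix (Fin n) (Fin n) ℝ, tau.IsSymm →
      ∃! sig : Matrix (Fin n) (Fin n) ℝ, sig.IsSymm ∧ opS Sg sig = tau := by
  have hSg : Sg.IsSymm := isHermitian_iff_isSymm.mp hpos.isHermitian
  set R := hpos.posSemidef.sqrt⁻¹
  have hR : IsUnit R := hpos.isUnit_sqrt_inv
  have hRR : R * R = Sg⁻¹ := by rw [← Matrix.mul_inv_rev, hpos.posSemidef.sqrt_mul_self]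
  have hRsymm : R.IsSymm := hpos.posSemidef.isSymm_sqrt.inv
  have hconj_pos : ∀ σ : Matrix (Fin n) (Fin n) ℝ, σ.IsSymm → σ ≠ 0 →
      0 < ((R * σ * R) ^ 2).trace := fun σ hσ hne =>
    trace_sq_pos_of_isSymm (hσ.mul_mul_same hRsymm)
      (by rwa [Ne, hR.mul_left_eq_zero, hR.mul_right_eq_zero])
  have hinj : ∀ σ : Matrix (Fin n) (Fin n) ℝ, σ.IsSymm → opS Sg σ = 0 → σ = 0 := by
    intro σ hσ h0
    by_contra hne
    have hle := trace_sq_le_trace_mul_opS hRR σ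
    rw [h0, Matrix.mul_zero, trace_zero] at hle
    exact (hconj_pos σ hσ hne).not_ge hle
  refine ⟨fun σ => isSymm_opS hSg, fun σ₁ σ₂ _ _ => trace_mul_opS_comm σ₁ σ₂,
    fun σ _ => trace_sq_le_trace_mul_opS hRR σ, hconj_pos, fun τ hτ => ?_⟩
  simp only [← mem_selfAdjoint_submodule_iff_isSymm, ← opSₗ_apply] at hτ hinj ⊢
  exact LinearMap.existsUnique_mem_apply_eq
    (fun σ hσ => mem_selfAdjoint_submodule_iff_isSymm.mpr
      (isSymm_opS hSg (mem_selfAdjoint_submodule_iff_isSymm.mp hσ))) hinj hτ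

/-- `S_Σ` maps symmetric matrices to symmetric matrices, is self-adjoint for the
Frobenius inner product `⟨σ₁,σ₂⟩ = Tr(σ₁σ₂)`, is positive definite:
`⟨σ, S_Σ(σ)⟩ ≥ Tr((Σ^{−1/2} σ Σ^{−1/2})²)`, with the latter strictly positive for `σ ≠ 0`;
consequently `S_Σ` is a bijection on the space of real symmetric matrices. -/
theorem stmt4 {n : ℕ} (hn : 1 ≤ n) (Sg : Matrix (Fin n) (Fin n) ℝ)
    (hsymm : Sg.IsSymm) (hpos : Sg.PosDef) :
    (∀ sig : Matrix (Fin n) (Fin n) ℝ, sig.IsSymm → (opS Sg sig).IsSymm) ∧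
    (∀ sig1 sig2 : Matrix (Fin n) (Fin n) ℝ, sig1.IsSymm → sig2.IsSymm →
      (sig1 * opS Sg sig2).trace = (opS Sg sig1 * sig2).trace) ∧
    (∀ sig : Matrix (Fin n) (Fin n) ℝ, sig.IsSymm →
      (sig * opS Sg sig).trace ≥ ((hpos.posSemidef.sqrt⁻¹ * sig * hpos.posSemidef.sqrt⁻¹) ^ 2).trace) ∧
    (∀ sig : Matrix (Fin n) (Fin n) ℝ, sig.IsSymm → sig ≠ 0 →
      0 < ((hpos.posSemidef.sqrt⁻¹ * sig * hpos.posSemidef.sqrt⁻¹) ^ 2).trace) ∧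
    ∀ tau : Matrix (Fin n) (Fin n) ℝ, tau.IsSymm →
      ∃! sig : Matrix (Fin n) (Fin n) ℝ, sig.IsSymm ∧ opS Sg sig = tau :=
  stmt4_general Sg hpos
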